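/- arXiv:2409.00865 — 2 statements merged into one kernel-verified Lean document; each statement's English description precedes it below -/
import Mathlib

section
/- Define M : [0,1/2) → ℝ by M(g) = (1−2g)² − E(2g)². Then M is strictly decreasing on [0,1/2), M(0) = 1, and there is a unique g* ∈ (0,1/2) with M(g*) = 0; moreover g* ∈ (1/4, 3/10), M(g) > 0 for 0 ≤ g < g*, and M(g) < 0 for g* < g < 1/2. (This is the monogamy score M₁ = M₂ = E_s² − E₁₂² − E₁₃² − E₂₃² of the non-generic GHZ-class state ψ(g₁,0,0,r) with r = 1, where E_s = E_a = 1−2g₁, E₁₂ = E₁₃ = 0 and E₂₃ = E(2g₁); the monogamy relation holds exactly up to the threshold g* ≈ 0.28 and is violated beyond it.) -/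
/-!
`M` is strictly decreasing because `1 - 2g` decreases while the concurrence `2g` and hence
`E(2g) ≥ 0` increase. Hence `M` has at most one zero, and by continuity exactly one, in
`(1/4, 3/10)`, where `M (1/4) > 0 > M (3/10)`.

Both endpoint values reduce to elementary estimates. At `g = 3/10` the entropy argument is
`9/10` and `E(3/5) > 2/5` amounts to `9⁹ · 2⁴ < 10¹⁰`. At `g = 1/4` it is `p = (2 + √3)/4`,
and `p (1 - p) = 1/16` turns `E(1/2)` into `2 - √3 - (√3/2) log₂ p`, so that `E(1/2) < 1/2`
follows from the crude bounds `log p ≥ 1 - 1/p = 4√3 - 7` and `log 2 > 1/2`.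
-/

/-- Binary Shannon entropy (base 2), with the convention `0 * log₂ 0 = 0`
(automatic since `Real.logb 2 0 = 0`). -/
noncomputable def binEntropy (p : ℝ) : ℝ :=
  -p * Real.logb 2 p - (1 - p) * Real.logb 2 (1 - p)

/-- Entanglement-of-formation function of the concurrence `C`. -/
noncomputable def eof (C : ℝ) : ℝ :=
  binEntropy ((1 + Real.sqrt (1 - C ^ 2)) / 2)

/-- The monogamy score of the non-generic GHZ-class state `ψ(g,0,0,1)`:
`M(g) = (1-2g)² - E(2g)²`. -/
noncomputable def M (g : ℝ) : ℝ := (1 - 2 * g) ^ 2 - (eof (2 * g)) ^ 2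

lemma binEntropy_eq_div_log_two (p : ℝ) : binEntropy p = Real.binEntropy p / Real.log 2 := by
  simp only [binEntropy, Real.binEntropy, Real.logb, Real.log_inv]
  ring

lemma eof_eq_div_log_two (C : ℝ) :
    eof C = Real.binEntropy ((1 + √(1 - C ^ 2)) / 2) / Real.log 2 :=
  binEntropy_eq_div_log_two _

@[fun_prop]
lemma continuous_eof : Continuous eof := by
  simp only [funext eof_eq_div_log_two]
  fun_prop

lemma eof_nonneg (C : ℝ) : 0 ≤ eof C := by
  rw [eof_eq_div_log_two]
  refine div_nonneg (Real.binEntropy_nonneg ?_ ?_) (Real.log_pos one_lt_two).le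
  · linarith [Real.sqrt_nonneg (1 - C ^ 2)]
  · linarith [Real.sqrt_le_one.mpr (by nlinarith : 1 - C ^ 2 ≤ 1)]

lemma eof_strictMonoOn : StrictMonoOn eof (Set.Icc 0 1) := by
  rintro a ⟨ha₀, -⟩ b ⟨-, hb₁⟩ hab
  have hsqrt : √(1 - b ^ 2) < √(1 - a ^ 2) := Real.sqrt_lt_sqrt (by nlinarith) (by nlinarith)
  have ha : √(1 - a ^ 2) ≤ 1 := Real.sqrt_le_one.mpr (by nlinarith)
  have hb : 0 ≤ √(1 - b ^ 2) := Real.sqrt_nonneg _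
  rw [eof_eq_div_log_two, eof_eq_div_log_two]
  refine div_lt_div_of_pos_right ?_ (Real.log_pos one_lt_two)
  exact Real.binEntropy_strictAntiOn ⟨by linarith, by linarith⟩ ⟨by linarith, by linarith⟩
    (by linarith)

lemma continuous_M : Continuous M := by
  unfold M
  fun_prop

lemma M_strictAntiOn : StrictAntiOn M (Set.Ico 0 (1 / 2)) := by
  rintro a ⟨ha₀, -⟩ b ⟨-, hb₁⟩ hab
  have heof : eof (2 * a) < eof (2 * b) :=
    eof_strictMonoOn ⟨by linarith, by linarith⟩ ⟨by linarith, by linarith⟩ (by linarith)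
  have heof_sq : eof (2 * a) ^ 2 < eof (2 * b) ^ 2 := by
    nlinarith [eof_nonneg (2 * a)]
  have hlin_sq : (1 - 2 * b) ^ 2 < (1 - 2 * a) ^ 2 := by nlinarith
  simp only [M]
  linarith

lemma M_zero : M 0 = 1 := by
  simp [M, eof, binEntropy]

lemma eof_three_fifths_gt : 2 / 5 < eof (3 / 5) := by
  have hsqrt : √(1 - (3 / 5 : ℝ) ^ 2) = 4 / 5 := by
    rw [show 1 - (3 / 5 : ℝ) ^ 2 = (4 / 5) ^ 2 by norm_num]
    exact Real.sqrt_sq (by norm_num)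
  have hentropy : Real.binEntropy (9 / 10) = Real.log 10 - 9 / 10 * Real.log 9 := by
    rw [Real.binEntropy, show (1 : ℝ) - 9 / 10 = 10⁻¹ by norm_num, inv_inv, inv_div,
      Real.log_div (by norm_num) (by norm_num)]
    ring
  have key := Real.log_lt_log (by norm_num) (show (9 : ℝ) ^ 9 * 2 ^ 4 < 10 ^ 10 by norm_num)
  rw [Real.log_mul (by norm_num) (by norm_num), Real.log_pow, Real.log_pow, Real.log_pow] at key
  push_cast at key
  rw [eof_eq_div_log_two, hsqrt, show (1 + 4 / 5 : ℝ) / 2 = 9 / 10 by norm_num, hentropy,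
    lt_div_iff₀ (Real.log_pos one_lt_two)]
  linarith

lemma M_three_tenths_neg : M (3 / 10) < 0 := by
  have := eof_three_fifths_gt
  rw [M, show 2 * (3 / 10 : ℝ) = 3 / 5 by norm_num]
  nlinarith

lemma binEntropy_two_add_sqrt_three_div_four_lt :
    Real.binEntropy ((2 + √3) / 4) < Real.log 2 / 2 := by
  set s := √3
  set p := (2 + s) / 4
  have hs_sq : s ^ 2 = 3 := Real.sq_sqrt (by norm_num)
  have hs_lo : 3 / 2 < s := by nlinarith [Real.sqrt_nonneg 3]
  have hs_hi : s < 7 / 4 := by nlinarith [Real.sqrt_nonneg 3]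
  have hp : 0 < p := by positivity
  have hq : 0 < 1 - p := by simp only [p]; linarith
  have hlog_one_sub : Real.log (1 - p) = -4 * Real.log 2 - Real.log p := by
    have hprod : p * (1 - p) = (2 ^ 4)⁻¹ := by simp only [p]; nlinarith
    have := congrArg Real.log hprod
    rw [Real.log_mul hp.ne' hq.ne', Real.log_inv, Real.log_pow] at this
    push_cast at this
    linarith
  have hentropy : Real.binEntropy p = -(s / 2) * Real.log p + (2 - s) * Real.log 2 := by
    rw [Real.binEntropy, Real.log_inv, Real.log_inv, hlog_one_sub]
    simp only [p]
    ring
  have hlog_p : 4 * s - 7 ≤ Real.log p := by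
    have h := Real.one_sub_inv_le_log_of_pos hp
    rw [show p⁻¹ = 8 - 4 * s from inv_eq_of_mul_eq_one_right (by simp only [p]; nlinarith)] at h
    linarith
  have hlog_two : 1 / 2 < Real.log 2 := by linarith [Real.log_two_gt_d9]
  rw [hentropy]
  nlinarith [mul_le_mul_of_nonneg_left hlog_p (by linarith : 0 ≤ s / 2),
    mul_lt_mul_of_pos_left hlog_two (by linarith : 0 < s - 3 / 2)]

lemma eof_half_lt : eof (1 / 2) < 1 / 2 := by
  have hsqrt : √(1 - (1 / 2 : ℝ) ^ 2) = √3 / 2 := by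
    rw [show 1 - (1 / 2 : ℝ) ^ 2 = 3 / 2 ^ 2 by norm_num, Real.sqrt_div' _ (by positivity),
      Real.sqrt_sq (by norm_num)]
  rw [eof_eq_div_log_two, hsqrt, show (1 + √3 / 2) / 2 = (2 + √3) / 4 by ring,
    div_lt_iff₀ (Real.log_pos one_lt_two)]
  linarith [binEntropy_two_add_sqrt_three_div_four_lt]

lemma M_one_quarter_pos : 0 < M (1 / 4) := by
  have := eof_half_lt
  rw [M, show 2 * (1 / 4 : ℝ) = 1 / 2 by norm_num]
  nlinarith [eof_nonneg (1 / 2)]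

/-- `M` is strictly decreasing on `[0,1/2)`, `M 0 = 1`, and there is a unique
`g* ∈ (0,1/2)` with `M g* = 0`; moreover `g* ∈ (1/4, 3/10)`, `M g > 0` for
`0 ≤ g < g*`, and `M g < 0` for `g* < g < 1/2`. -/
theorem monogamy_threshold :
    StrictAntiOn M (Set.Ico (0 : ℝ) (1 / 2)) ∧ M 0 = 1 ∧
    (∃! gs : ℝ, gs ∈ Set.Ioo (0 : ℝ) (1 / 2) ∧ M gs = 0) ∧
    ∀ gs : ℝ, gs ∈ Set.Ioo (0 : ℝ) (1 / 2) → M gs = 0 →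
      gs ∈ Set.Ioo (1 / 4 : ℝ) (3 / 10) ∧
      (∀ g : ℝ, 0 ≤ g → g < gs → 0 < M g) ∧
      (∀ g : ℝ, gs < g → g < 1 / 2 → M g < 0) := by
  obtain ⟨g₀, ⟨hg₀_lo, hg₀_hi⟩, hMg₀⟩ :=
    intermediate_value_Ioo' (by norm_num) continuous_M.continuousOn
      ⟨M_three_tenths_neg, M_one_quarter_pos⟩
  have hg₀ : g₀ ∈ Set.Ico (0 : ℝ) (1 / 2) := ⟨by linarith, by linarith⟩
  have hunique : ∀ g ∈ Set.Ioo (0 : ℝ) (1 / 2), M g = 0 → g = g₀ := fun g hg hMg =>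
    M_strictAntiOn.injOn (Set.Ioo_subset_Ico_self hg) hg₀ (hMg.trans hMg₀.symm)
  refine ⟨M_strictAntiOn, M_zero,
    ⟨g₀, ⟨⟨by linarith, by linarith⟩, hMg₀⟩, fun g hg => hunique g hg.1 hg.2⟩, ?_⟩
  rintro gs hgs hMgs
  obtain rfl := hunique gs hgs hMgs
  refine ⟨⟨hg₀_lo, hg₀_hi⟩, fun g hg hlt => ?_, fun g hlt hg => ?_⟩
  · exact hMg₀ ▸ M_strictAntiOn ⟨hg, by linarith⟩ hg₀ hlt
  · exact hMg₀ ▸ M_strictAntiOn hg₀ ⟨by linarith, hg⟩ hlt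
end

section
/- There exist x, y, z > 0 and t > 0 with x + y + z + t = 1 such that (27xyz)² < E(2√(xy))² + E(2√(xz))² + E(2√(yz))². (Some three-qubit W-class pure states violate the accessible-entanglement monogamy relation E_a² ≥ E₁₂² + E₁₃² + E₂₃².) -/
/-!
Take `x = y = z = ε` small. The left side is `729 ε⁶`, while each pairwise term is at least `ε⁴`:
for `p ≥ 1/2` one has `h(p) ≥ 1 - p` (as `-log₂ (1 - p) ≥ 1`), and `1 - √(1 - C²) ≥ C² / 2`,
so `E(C) ≥ C² / 4`. Hence `3 ε⁴ > 729 ε⁶` as soon as `ε² < 1/243`.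
-/

lemma one_sub_le_binEntropy {p : ℝ} (hp : 1 / 2 ≤ p) (hp1 : p ≤ 1) :
    1 - p ≤ binEntropy p := by
  have hlog_p : Real.logb 2 p ≤ 0 := Real.logb_nonpos one_lt_two (by linarith) hp1
  have hlog_q : (1 - p) * Real.logb 2 (1 - p) ≤ -(1 - p) := by
    rcases (sub_nonneg.2 hp1).eq_or_lt with hq | hq
    · simp [← hq]
    · have : Real.logb 2 (1 - p) ≤ -1 := by
        calc Real.logb 2 (1 - p) ≤ Real.logb 2 2⁻¹ :=
              Real.logb_le_logb_of_le one_lt_two hq (by linarith)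
          _ = -1 := by simp
      nlinarith
  unfold binEntropy
  nlinarith

lemma sq_div_four_le_eof {C : ℝ} (hC : C ^ 2 ≤ 1) : C ^ 2 / 4 ≤ eof C := by
  set s := Real.sqrt (1 - C ^ 2)
  have hs0 : 0 ≤ s := Real.sqrt_nonneg _
  have hs_sq : s ^ 2 = 1 - C ^ 2 := Real.sq_sqrt (by linarith)
  have hs1 : s ≤ 1 := by nlinarith
  calc C ^ 2 / 4 ≤ 1 - (1 + s) / 2 := by nlinarith
    _ ≤ eof C := one_sub_le_binEntropy (by linarith) (by linarith)

/-- Some three-qubit W-class pure states violate the accessible-entanglement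
monogamy relation `E_a² ≥ E₁₂² + E₁₃² + E₂₃²`. -/
theorem exists_accessible_monogamy_violation_W_class :
    ∃ x y z t : ℝ, 0 < x ∧ 0 < y ∧ 0 < z ∧ 0 < t ∧ x + y + z + t = 1 ∧
      (27 * x * y * z) ^ 2 <
        (eof (2 * Real.sqrt (x * y))) ^ 2 + (eof (2 * Real.sqrt (x * z))) ^ 2 +
          (eof (2 * Real.sqrt (y * z))) ^ 2 := by
  set ε : ℝ := 1 / 100
  refine ⟨ε, ε, ε, 1 - 3 * ε, by norm_num, by norm_num, by norm_num, by norm_num, by ring, ?_⟩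
  have hE : ε ^ 2 ≤ eof (2 * ε) := by
    convert sq_div_four_le_eof (C := 2 * ε) (by norm_num [ε]) using 1
    ring
  rw [Real.sqrt_mul_self (by norm_num)]
  calc (27 * ε * ε * ε) ^ 2 < 3 * (ε ^ 2) ^ 2 := by norm_num [ε]
    _ ≤ 3 * eof (2 * ε) ^ 2 := by gcongr
    _ = _ := by ring
end
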